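/- Let S := {(x,y,z) ∈ ℝ³ : x ≥ 0 and −x² + y² + 4|z| ≤ 0}, let T > 0, and let γ = (γ₁,γ₂,γ₃) : [0,T] → ℝ³ be a curve such that (−γ(s))∗γ(t) ∈ S for all 0 ≤ s < t ≤ T, where ∗ is the Heisenberg group law and −p denotes the group inverse of p. If γ is differentiable at a point s ∈ [0,T), then γ₃'(s) = (γ₁(s)γ₂'(s) − γ₂(s)γ₁'(s))/2, γ₂'(s)² ≤ γ₁'(s)², and γ₁'(s) ≥ 0; that is, γ'(s) is either zero or a horizontal future-directed causal vector. -/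

import Mathlib

open Set
open Filter Topology

/-- The Heisenberg group law on `ℝ³`. -/
noncomputable def heisMul (p q : ℝ × ℝ × ℝ) : ℝ × ℝ × ℝ :=
  (p.1 + q.1, p.2.1 + q.2.1, p.2.2 + q.2.2 + (p.1 * q.2.1 - q.1 * p.2.1) / 2)

/-- The Heisenberg group inverse. -/
def heisInv (p : ℝ × ℝ × ℝ) : ℝ × ℝ × ℝ :=
  (-p.1, -p.2.1, -p.2.2)

/-- The causal future of the origin: `{(x,y,z) : x ≥ 0 and −x² + y² + 4|z| ≤ 0}`. -/
def causalFutureSet : Set (ℝ × ℝ × ℝ) :=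
  {p | 0 ≤ p.1 ∧ -p.1^2 + p.2.1^2 + 4 * |p.2.2| ≤ 0}

/-!
Left translation by `γ(s)⁻¹` is affine, so `q t := γ(s)⁻¹ ∗ γ(t)` satisfies `q s = 0`, stays in
`causalFutureSet` for `t > s`, and has velocity `(d₁, d₂, d₃ − (γ₁(s) d₂ − γ₂(s) d₁)/2)` at `s`.
Writing `q t = (t - s) • w t`, membership in `causalFutureSet` gives `w₁ ≥ 0`, `w₂² ≤ w₁²` and
`4 |w₃| ≤ (t - s) w₁²`. These are closed conditions on `(t - s, w t)`, so they survive the limit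
`(t - s, w t) → (0, q'(s))`, where the last one kills the vertical component of `q'(s)`.
-/

theorem heisMul_heisInv_apply (p q : ℝ × ℝ × ℝ) :
    heisMul (heisInv p) q =
      (q.1 - p.1, q.2.1 - p.2.1, q.2.2 - p.2.2 + (p.2.1 * q.1 - p.1 * q.2.1) / 2) := by
  simp only [heisMul, heisInv, Prod.mk.injEq]
  exact ⟨by ring, by ring, by ring⟩

theorem heisMul_heisInv_self (p : ℝ × ℝ × ℝ) : heisMul (heisInv p) p = 0 := by
  simp only [heisMul_heisInv_apply, sub_self, mul_comm p.2.1 p.1, zero_div, add_zero]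
  rfl

theorem HasDerivAt.heisMul_left {γ : ℝ → ℝ × ℝ × ℝ} {d : ℝ × ℝ × ℝ} {s : ℝ}
    (g : ℝ × ℝ × ℝ) (hγ : HasDerivAt γ d s) :
    HasDerivAt (fun t => heisMul g (γ t))
      (d.1, d.2.1, d.2.2 + (g.1 * d.2.1 - d.1 * g.2.1) / 2) s := by
  have h₁ : HasDerivAt (fun t => (γ t).1) d.1 s := (hasFDerivAt_fst.comp_hasDerivAt s hγ :)
  have h₂₃ : HasDerivAt (fun t => (γ t).2) d.2 s := (hasFDerivAt_snd.comp_hasDerivAt s hγ :)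
  have h₂ : HasDerivAt (fun t => (γ t).2.1) d.2.1 s :=
    (hasFDerivAt_fst.comp_hasDerivAt s h₂₃ :)
  have h₃ : HasDerivAt (fun t => (γ t).2.2) d.2.2 s :=
    (hasFDerivAt_snd.comp_hasDerivAt s h₂₃ :)
  exact (h₁.const_add g.1).prodMk ((h₂.const_add g.2.1).prodMk
    ((h₃.const_add g.2.2).add (((h₂.const_mul g.1).sub (h₁.mul_const g.2.1)).div_const 2)))

def rescaledCausalFuture : Set (ℝ × ℝ × ℝ × ℝ) :=
  {x | 0 ≤ x.2.1 ∧ x.2.2.1 ^ 2 ≤ x.2.1 ^ 2 ∧ 4 * |x.2.2.2| ≤ x.1 * x.2.1 ^ 2}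

theorem isClosed_rescaledCausalFuture : IsClosed rescaledCausalFuture := by
  simp only [rescaledCausalFuture, ofPred_and]
  exact (isClosed_le (by fun_prop) (by fun_prop)).inter
    ((isClosed_le (by fun_prop) (by fun_prop)).inter (isClosed_le (by fun_prop) (by fun_prop)))

theorem mem_rescaledCausalFuture_of_smul_mem {h : ℝ} {w : ℝ × ℝ × ℝ} (hh : 0 < h)
    (hw : h • w ∈ causalFutureSet) : (h, w) ∈ rescaledCausalFuture := by
  obtain ⟨hw₁, hw⟩ := hw
  simp only [Prod.smul_fst, Prod.smul_snd, smul_eq_mul, abs_mul, abs_of_pos hh] at hw₁ hw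
  have hcone : h * (w.2.1 ^ 2 - w.1 ^ 2) + 4 * |w.2.2| ≤ 0 :=
    nonpos_of_mul_nonpos_right (by linarith) hh
  refine ⟨nonneg_of_mul_nonneg_right hw₁ hh, ?_, ?_⟩
  · nlinarith [abs_nonneg w.2.2]
  · nlinarith [mul_nonneg hh.le (sq_nonneg w.2.1)]

theorem HasDerivWithinAt.causal_of_eventually_mem_causalFutureSet {q : ℝ → ℝ × ℝ × ℝ}
    {v : ℝ × ℝ × ℝ} {s : ℝ} (hq : HasDerivWithinAt q v (Ioi s) s) (hq₀ : q s = 0)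
    (hS : ∀ᶠ t in 𝓝[>] s, q t ∈ causalFutureSet) :
    v.2.2 = 0 ∧ v.2.1 ^ 2 ≤ v.1 ^ 2 ∧ 0 ≤ v.1 := by
  have hslope : Tendsto (slope q s) (𝓝[>] s) (𝓝 v) :=
    (hasDerivWithinAt_iff_tendsto_slope' (lt_irrefl s)).1 hq
  have hstep : Tendsto (fun t => t - s) (𝓝[>] s) (𝓝 0) :=
    ((continuous_sub_right s).tendsto' s 0 (sub_self s)).mono_left nhdsWithin_le_nhds
  have hmem : ∀ᶠ t in 𝓝[>] s, (t - s, slope q s t) ∈ rescaledCausalFuture := by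
    filter_upwards [hS, self_mem_nhdsWithin] with t ht hst
    refine mem_rescaledCausalFuture_of_smul_mem (sub_pos.2 hst) ?_
    rwa [sub_smul_slope, vsub_eq_sub, hq₀, sub_zero]
  obtain ⟨hv₁, hv₂, hv₃⟩ :=
    isClosed_rescaledCausalFuture.mem_of_tendsto (hstep.prodMk_nhds hslope) hmem
  exact ⟨abs_nonpos_iff.1 (by linarith), hv₂, hv₁⟩

theorem synthetic_causal_has_causal_velocity_general (T : ℝ)
    (γ : ℝ → ℝ × ℝ × ℝ)
    (hγ : ∀ s t : ℝ, 0 ≤ s → s < t → t ≤ T →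
      heisMul (heisInv (γ s)) (γ t) ∈ causalFutureSet)
    (s : ℝ) (hs : s ∈ Ico 0 T) (d : ℝ × ℝ × ℝ) (hd : HasDerivAt γ d s) :
    d.2.2 = ((γ s).1 * d.2.1 - (γ s).2.1 * d.1) / 2 ∧
    d.2.1^2 ≤ d.1^2 ∧ 0 ≤ d.1 := by
  have hfuture : ∀ᶠ t in 𝓝[>] s, heisMul (heisInv (γ s)) (γ t) ∈ causalFutureSet := by
    filter_upwards [Ioo_mem_nhdsGT hs.2] with t ht
    exact hγ s t hs.1 ht.1 ht.2.le
  obtain ⟨hhor, hcone, hfut⟩ :=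
    ((hd.heisMul_left (heisInv (γ s))).hasDerivWithinAt.causal_of_eventually_mem_causalFutureSet
      (heisMul_heisInv_self (γ s)) hfuture)
  simp only [heisInv] at hhor
  exact ⟨by linarith, hcone, hfut⟩

/-- if `γ : [0,T] → ℝ³` is causal in the synthetic sense, i.e.
`(−γ(s))∗γ(t)` lies in the causal future of the origin whenever `0 ≤ s < t ≤ T`,
then at every point `s ∈ [0,T)` of differentiability the velocity `d = γ'(s)`
satisfies the horizontality condition `d₃ = (γ₁(s)d₂ − γ₂(s)d₁)/2` and the
causality conditions `d₂² ≤ d₁²` and `d₁ ≥ 0`; that is, `γ'(s)` is either zero or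
a horizontal future-directed causal vector. -/
theorem synthetic_causal_has_causal_velocity (T : ℝ) (hT : 0 < T)
    (γ : ℝ → ℝ × ℝ × ℝ)
    (hγ : ∀ s t : ℝ, 0 ≤ s → s < t → t ≤ T →
      heisMul (heisInv (γ s)) (γ t) ∈ causalFutureSet)
    (s : ℝ) (hs : s ∈ Ico 0 T) (d : ℝ × ℝ × ℝ) (hd : HasDerivAt γ d s) :
    d.2.2 = ((γ s).1 * d.2.1 - (γ s).2.1 * d.1) / 2 ∧
    d.2.1^2 ≤ d.1^2 ∧ 0 ≤ d.1 :=
  synthetic_causal_has_causal_velocity_general T γ hγ s hs d hd
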